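/- arXiv:2305.08480 — 5 statements merged into one kernel-verified Lean document; each statement's English description precedes it below -/
import Mathlib

section
/- For every integer r ≥ 1 and every q ∈ ℂ with q^r ≠ 1, one has 1/(1 − q^r)² = Σ_ζ [ 1/(r²·(1 − ζq)²) + (r − 1)/(r²·(1 − ζq)) ], where the sum runs over all r-th roots of unity ζ in ℂ. -/
/-!
Write `w = q ^ r`. For an `r`-th root of unity `ζ`, the point `x = ζ * q` satisfies `x ^ r = w`, so
the geometric sums `∑_{k<r} x ^ k` and `∑_{k<r} k x ^ k` turn each summand into
`P(x) / (r² (1 - w)²)` with `P(x) = ∑_{k<r} (r + (1 - w) k) x ^ k`. Summing over the roots of unity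
annihilates every monomial `x ^ k` with `0 < k < r` and multiplies the constant term `r` by `r`,
which leaves `1 / (1 - w)²`.
-/

open Finset Polynomial

lemma one_sub_mul_sum_range_natCast_mul_pow {R : Type*} [CommRing R] (x : R) (n : ℕ) :
    (1 - x) * ∑ k ∈ range n, (k : R) * x ^ k = x * ∑ k ∈ range n, x ^ k - n * x ^ n := by
  induction n with
  | zero => simp
  | succ n ih =>
    simp only [sum_range_succ, mul_add, ih]
    push_cast
    ring

lemma one_div_one_sub_sq_add_div_one_sub {K : Type*} [Field K] (x : K) (n : ℕ)
    (hx : x ^ n ≠ 1) :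
    1 / (1 - x) ^ 2 + ((n : K) - 1) / (1 - x) =
      (∑ k ∈ range n, ((n : K) + (1 - x ^ n) * k) * x ^ k) / (1 - x ^ n) ^ 2 := by
  have hxn : (1 : K) - x ^ n ≠ 0 := sub_ne_zero.2 hx.symm
  have hx1 : (1 : K) - x ≠ 0 := by
    rintro h
    obtain rfl : x = 1 := (sub_eq_zero.1 h).symm
    exact hx (one_pow n)
  have hgeom : ∑ k ∈ range n, x ^ k = (1 - x ^ n) / (1 - x) := by
    rw [eq_div_iff hx1, mul_comm, mul_neg_geom_sum]
  have hweighted : ∑ k ∈ range n, (k : K) * x ^ k =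
      (x * ∑ k ∈ range n, x ^ k - n * x ^ n) / (1 - x) := by
    rw [eq_div_iff hx1, mul_comm, one_sub_mul_sum_range_natCast_mul_pow]
  simp only [add_mul, mul_assoc, ← mul_sum, sum_add_distrib]
  rw [hweighted, hgeom]
  field_simp
  ring

namespace IsPrimitiveRoot

variable {R : Type*} [CommRing R] [IsDomain R] {ω : R} {r : ℕ}

theorem nthRootsFinset_one_eq_image [NeZero r] [DecidableEq R] (hω : IsPrimitiveRoot ω r) :
    nthRootsFinset r (1 : R) = (range r).image (ω ^ ·) := by
  ext ζ
  simp only [Polynomial.mem_nthRootsFinset (NeZero.pos r), mem_image, mem_range]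
  constructor
  · exact hω.eq_pow_of_pow_eq_one
  · rintro ⟨i, -, rfl⟩
    rw [pow_right_comm, hω.pow_eq_one, one_pow]

theorem sum_nthRootsFinset_pow_eq_zero (hω : IsPrimitiveRoot ω r) {k : ℕ} (hk : ¬ r ∣ k) :
    ∑ ζ ∈ nthRootsFinset r (1 : R), ζ ^ k = 0 := by
  classical
  rcases r.eq_zero_or_pos with rfl | hr
  · simp
  have : NeZero r := ⟨hr.ne'⟩
  have hωk : ω ^ k ≠ 1 := fun h => hk ((hω.pow_eq_one_iff_dvd k).1 h)
  rw [hω.nthRootsFinset_one_eq_image, sum_image fun i hi j hj => hω.injOn_pow hi hj]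
  simp_rw [pow_right_comm ω _ k]
  refine eq_zero_of_ne_zero_of_mul_left_eq_zero (sub_ne_zero.2 hωk.symm) ?_
  rw [mul_neg_geom_sum, pow_right_comm, hω.pow_eq_one, one_pow, sub_self]

theorem sum_nthRootsFinset_sum_range_mul_pow (hω : IsPrimitiveRoot ω r) (c : ℕ → R) (q : R) :
    ∑ ζ ∈ nthRootsFinset r (1 : R), ∑ k ∈ range r, c k * (ζ * q) ^ k = r * c 0 := by
  rcases r.eq_zero_or_pos with rfl | hr
  · simp
  have hfactor (k : ℕ) : ∑ ζ ∈ nthRootsFinset r (1 : R), c k * (ζ * q) ^ k =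
      c k * q ^ k * ∑ ζ ∈ nthRootsFinset r (1 : R), ζ ^ k := by
    rw [mul_sum]
    exact sum_congr rfl fun ζ _ => by ring
  rw [sum_comm, sum_congr rfl fun k _ => hfactor k, sum_eq_single_of_mem 0 (mem_range.2 hr)]
  · simp [hω.card_nthRootsFinset, mul_comm]
  · intro k hk hk0
    have hndvd : ¬ r ∣ k := Nat.not_dvd_of_pos_of_lt (Nat.pos_of_ne_zero hk0) (mem_range.1 hk)
    rw [hω.sum_nthRootsFinset_pow_eq_zero hndvd, mul_zero]

end IsPrimitiveRoot

/-- For every integer `r ≥ 1` and every `q ∈ ℂ` with `q^r ≠ 1`,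
`1/(1 − q^r)² = Σ_ζ [ 1/(r²(1 − ζq)²) + (r − 1)/(r²(1 − ζq)) ]`, the sum running
over all `r`-th roots of unity `ζ` in `ℂ`. -/
theorem stmt_1 (r : ℕ) (hr : 1 ≤ r) (q : ℂ) (hq : q ^ r ≠ 1) :
    1 / (1 - q ^ r) ^ 2 =
      ∑ ζ ∈ Polynomial.nthRootsFinset r (1 : ℂ),
        (1 / ((r : ℂ) ^ 2 * (1 - ζ * q) ^ 2) +
          ((r : ℂ) - 1) / ((r : ℂ) ^ 2 * (1 - ζ * q))) := by
  have hsummand : ∀ ζ ∈ nthRootsFinset r (1 : ℂ),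
      1 / ((r : ℂ) ^ 2 * (1 - ζ * q) ^ 2) + ((r : ℂ) - 1) / ((r : ℂ) ^ 2 * (1 - ζ * q)) =
        (∑ k ∈ range r, ((r : ℂ) + (1 - q ^ r) * k) * (ζ * q) ^ k) /
          ((r : ℂ) ^ 2 * (1 - q ^ r) ^ 2) := by
    intro ζ hζ
    have hζq : (ζ * q) ^ r = q ^ r := by
      rw [mul_pow, (Polynomial.mem_nthRootsFinset hr 1).1 hζ, one_mul]
    have h := one_div_one_sub_sq_add_div_one_sub (ζ * q) r (hζq ▸ hq)
    rw [hζq] at h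
    rw [div_mul_eq_div_div_swap, div_mul_eq_div_div_swap, ← add_div, h, div_div,
      mul_comm ((1 - q ^ r) ^ 2)]
  have hω := Complex.isPrimitiveRoot_exp r (by omega)
  rw [sum_congr rfl hsummand, ← sum_div, hω.sum_nthRootsFinset_sum_range_mul_pow]
  have hr0 : (r : ℂ) ≠ 0 := Nat.cast_ne_zero.2 (by omega)
  field_simp
  ring
end

section
/- For every integer r ≥ 1 and every q ∈ ℂ with q^r ≠ 1, one has 1/(1 − q^r)³ = Σ_ζ [ 1/(r³·(1 − ζq)³) + 3(r − 1)/(2r³·(1 − ζq)²) + (2r² − 3r + 1)/(2r³·(1 − ζq)) ], where the sum runs over all r-th roots of unity ζ in ℂ. -/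
/-!
Put `w = ζ * q` and `P(w) = 1 + w + ⋯ + w ^ (r - 1)`. Since `w ^ r = q ^ r`, we have
`1 / (1 - w) = P(w) / (1 - q ^ r)`, so the right-hand side is a combination of the power sums
`∑_ζ P(ζ q) ^ m` for `m ≤ 3`. Averaging over `ζ` kills every monomial `w ^ n` with `r ∤ n`, and the
cyclic shift `w ^ k * P(w) = P(w) + (q ^ r - 1)(1 + ⋯ + w ^ (k - 1))` reduces `P ^ 2` and `P ^ 3` to
sums of monomials of degree `< r`, whose averages are immediate.
-/

open Finset Polynomial

theorem IsPrimitiveRoot.sum_nthRootsFinset_pow {R : Type*} [CommRing R] [IsDomain R] {ω : R}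
    {r : ℕ} (hω : IsPrimitiveRoot ω r) (n : ℕ) :
    ∑ ζ ∈ nthRootsFinset r (1 : R), ζ ^ n = if r ∣ n then (r : R) else 0 := by
  classical
  rw [nthRootsFinset_def, ← Multiset.toFinset_eq hω.nthRoots_one_nodup, Finset.sum_mk,
    hω.nthRoots_eq (one_pow r), Multiset.map_map, ← Finset.range_val,
    ← Finset.sum_eq_multiset_sum]
  simp only [Function.comp_apply, mul_one, pow_right_comm _ _ n]
  split_ifs with hn
  · simp [(hω.pow_eq_one_iff_dvd n).mpr hn]
  · have hne : ω ^ n - 1 ≠ 0 := sub_ne_zero.mpr fun h => hn ((hω.pow_eq_one_iff_dvd n).mp h)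
    have h := geom_sum_mul (ω ^ n) r
    rw [pow_right_comm, hω.pow_eq_one, one_pow, sub_self] at h
    exact (mul_eq_zero.mp h).resolve_right hne

theorem pow_mul_geom_sum_of_pow_eq {R : Type*} [CommRing R] {w y : R} {r : ℕ} (hw : w ^ r = y)
    (k : ℕ) :
    w ^ k * ∑ i ∈ range r, w ^ i = ∑ i ∈ range r, w ^ i + (y - 1) * ∑ i ∈ range k, w ^ i := by
  induction k with
  | zero => simp
  | succ k ih =>
    linear_combination w * ih + geom_sum_succ' (x := w) (n := r) - geom_sum_succ (x := w) (n := r)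
      - (y - 1) * geom_sum_succ (x := w) (n := k) + hw

theorem inv_one_sub_eq_geom_sum_div {K : Type*} [Field K] {w y : K} {r : ℕ} (hw : w ^ r = y)
    (hy : y ≠ 1) : (1 - w)⁻¹ = (∑ i ∈ range r, w ^ i) / (1 - y) := by
  have hw1 : 1 - w ≠ 0 := fun h => hy (by rw [← hw, ← sub_eq_zero.mp h, one_pow])
  rw [eq_div_iff (sub_ne_zero.mpr hy.symm), ← hw, ← mul_neg_geom_sum, inv_mul_cancel_left₀ hw1]

section RootsOfUnity

variable {R : Type*} [CommRing R] [IsDomain R] {r : ℕ} {ω : R}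

theorem mul_pow_eq_of_mem_nthRootsFinset {ζ : R} (hr : 0 < r) (hζ : ζ ∈ nthRootsFinset r (1 : R))
    (q : R) : (ζ * q) ^ r = q ^ r := by
  rw [mul_pow, (mem_nthRootsFinset hr 1).mp hζ, one_mul]

theorem IsPrimitiveRoot.sum_nthRootsFinset_mul_pow (hω : IsPrimitiveRoot ω r) (q : R) (n : ℕ) :
    ∑ ζ ∈ nthRootsFinset r (1 : R), (ζ * q) ^ n = if r ∣ n then r * q ^ n else 0 := by
  simp only [mul_pow, ← sum_mul, hω.sum_nthRootsFinset_pow]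
  split_ifs <;> simp

theorem IsPrimitiveRoot.sum_nthRootsFinset_geom_sum (hω : IsPrimitiveRoot ω r) {k : ℕ}
    (hk : k ≤ r) (q : R) :
    ∑ ζ ∈ nthRootsFinset r (1 : R), ∑ i ∈ range k, (ζ * q) ^ i = if k = 0 then 0 else (r : R) := by
  rw [sum_comm]
  simp only [hω.sum_nthRootsFinset_mul_pow]
  rcases k with _ | k
  · simp
  · rw [sum_range_succ', sum_eq_zero fun i hi => if_neg fun hdvd =>
      i.succ_ne_zero (Nat.eq_zero_of_dvd_of_lt hdvd (by simp at hi; omega))]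
    simp

theorem IsPrimitiveRoot.sum_nthRootsFinset_pow_mul_geom_sum (hω : IsPrimitiveRoot ω r)
    (hr : 0 < r) {k : ℕ} (hk : k ≤ r) (q : R) :
    ∑ ζ ∈ nthRootsFinset r (1 : R), (ζ * q) ^ k * ∑ i ∈ range r, (ζ * q) ^ i =
      if k = 0 then (r : R) else r * q ^ r := by
  rw [sum_congr rfl fun ζ hζ =>
      pow_mul_geom_sum_of_pow_eq (mul_pow_eq_of_mem_nthRootsFinset hr hζ q) k,
    sum_add_distrib, ← mul_sum, hω.sum_nthRootsFinset_geom_sum le_rfl,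
    hω.sum_nthRootsFinset_geom_sum hk, if_neg hr.ne']
  split_ifs <;> ring

theorem IsPrimitiveRoot.sum_nthRootsFinset_geom_sum_sq (hω : IsPrimitiveRoot ω r) (hr : 0 < r)
    (q : R) :
    ∑ ζ ∈ nthRootsFinset r (1 : R), (∑ i ∈ range r, (ζ * q) ^ i) ^ 2 =
      r * (1 + (r - 1) * q ^ r) := by
  simp only [sq, sum_mul]
  rw [sum_comm, sum_congr rfl fun k hk =>
    hω.sum_nthRootsFinset_pow_mul_geom_sum hr (mem_range.mp hk).le q]
  obtain ⟨n, rfl⟩ : ∃ n, r = n + 1 := ⟨r - 1, by omega⟩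
  simp only [sum_range_succ', Nat.add_eq_zero_iff, one_ne_zero, and_false, if_false, if_true,
    sum_const, card_range, nsmul_eq_mul]
  push_cast
  ring

theorem IsPrimitiveRoot.sum_nthRootsFinset_geom_sum_cube (hω : IsPrimitiveRoot ω r)
    (hr : 0 < r) (q : R) :
    2 * ∑ ζ ∈ nthRootsFinset r (1 : R), (∑ i ∈ range r, (ζ * q) ^ i) ^ 3 =
      r * (2 + (r - 1) * (r + 4) * q ^ r + (r - 1) * (r - 2) * q ^ (2 * r)) := by
  have hcube : ∀ ζ ∈ nthRootsFinset r (1 : R), (∑ i ∈ range r, (ζ * q) ^ i) ^ 3 =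
      ∑ k ∈ range r, ((∑ i ∈ range r, (ζ * q) ^ i) ^ 2 +
        (q ^ r - 1) * ∑ i ∈ range k, (ζ * q) ^ i * ∑ j ∈ range r, (ζ * q) ^ j) := by
    intro ζ hζ
    rw [pow_succ', sum_mul]
    refine sum_congr rfl fun k _ => ?_
    rw [sq, ← mul_assoc, pow_mul_geom_sum_of_pow_eq (mul_pow_eq_of_mem_nthRootsFinset hr hζ q) k,
      ← sum_mul]
    ring
  rw [sum_congr rfl hcube, sum_comm]
  simp only [sum_add_distrib, ← mul_sum]
  rw [hω.sum_nthRootsFinset_geom_sum_sq hr, sum_congr rfl fun k hk => sum_comm.trans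
    (sum_congr rfl fun i hi => hω.sum_nthRootsFinset_pow_mul_geom_sum hr
      ((mem_range.mp hi).trans (mem_range.mp hk)).le q)]
  obtain ⟨n, rfl⟩ : ∃ n, r = n + 1 := ⟨r - 1, by omega⟩
  clear hcube hω hr
  have hgauss : 2 * ∑ i ∈ range n, (i : R) = n * (n - 1) := by
    induction n with
    | zero => simp
    | succ n ih => rw [sum_range_succ]; push_cast; linear_combination ih
  simp only [sum_range_succ', Nat.add_eq_zero_iff, one_ne_zero, and_false, if_false, if_true,
    range_zero, sum_empty, add_zero, sum_add_distrib, ← sum_mul, sum_const, card_range,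
    nsmul_eq_mul]
  push_cast
  linear_combination (n + 1 : R) * (q ^ (n + 1) - 1) * q ^ (n + 1) * hgauss

end RootsOfUnity

theorem sum_nthRootsFinset_inv_one_sub_mul_pow {K : Type*} [Field K] {r : ℕ} (hr : 0 < r) {q : K}
    (hq : q ^ r ≠ 1) (m : ℕ) :
    ∑ ζ ∈ nthRootsFinset r (1 : K), (1 - ζ * q)⁻¹ ^ m =
      (∑ ζ ∈ nthRootsFinset r (1 : K), (∑ i ∈ range r, (ζ * q) ^ i) ^ m) / (1 - q ^ r) ^ m := by
  rw [sum_div]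
  refine sum_congr rfl fun ζ hζ => ?_
  rw [inv_one_sub_eq_geom_sum_div (mul_pow_eq_of_mem_nthRootsFinset hr hζ q) hq, div_pow]

/-- For every integer `r ≥ 1` and every `q ∈ ℂ` with `q^r ≠ 1`,
`1/(1 − q^r)³ = Σ_ζ [ 1/(r³(1 − ζq)³) + 3(r − 1)/(2r³(1 − ζq)²)
+ (2r² − 3r + 1)/(2r³(1 − ζq)) ]`, the sum running over all `r`-th roots of
unity `ζ` in `ℂ`. -/
theorem stmt_2 (r : ℕ) (hr : 1 ≤ r) (q : ℂ) (hq : q ^ r ≠ 1) :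
    1 / (1 - q ^ r) ^ 3 =
      ∑ ζ ∈ Polynomial.nthRootsFinset r (1 : ℂ),
        (1 / ((r : ℂ) ^ 3 * (1 - ζ * q) ^ 3) +
          3 * ((r : ℂ) - 1) / (2 * (r : ℂ) ^ 3 * (1 - ζ * q) ^ 2) +
          (2 * (r : ℂ) ^ 2 - 3 * (r : ℂ) + 1) / (2 * (r : ℂ) ^ 3 * (1 - ζ * q))) := by
  have hω := Complex.isPrimitiveRoot_exp r (by omega)
  -- the exponent `1` lets all three terms go through `sum_nthRootsFinset_inv_one_sub_mul_pow`
  have hsummand : ∀ ζ : ℂ,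
      1 / ((r : ℂ) ^ 3 * (1 - ζ * q) ^ 3) +
          3 * ((r : ℂ) - 1) / (2 * (r : ℂ) ^ 3 * (1 - ζ * q) ^ 2) +
          (2 * (r : ℂ) ^ 2 - 3 * (r : ℂ) + 1) / (2 * (r : ℂ) ^ 3 * (1 - ζ * q)) =
        (2 * (1 - ζ * q)⁻¹ ^ 3 + 3 * (r - 1) * (1 - ζ * q)⁻¹ ^ 2 +
          (2 * r ^ 2 - 3 * r + 1) * (1 - ζ * q)⁻¹ ^ 1) / (2 * r ^ 3) := fun ζ => by
    simp only [div_eq_mul_inv, mul_inv, inv_pow]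
    ring
  have hr0 : (r : ℂ) ≠ 0 := Nat.cast_ne_zero.mpr (by omega)
  have hY : 1 - q ^ r ≠ 0 := sub_ne_zero.mpr hq.symm
  have hcube := hω.sum_nthRootsFinset_geom_sum_cube hr q
  rw [sum_congr rfl fun ζ _ => hsummand ζ, ← sum_div, sum_add_distrib, sum_add_distrib,
    ← mul_sum, ← mul_sum, ← mul_sum, sum_nthRootsFinset_inv_one_sub_mul_pow hr hq,
    sum_nthRootsFinset_inv_one_sub_mul_pow hr hq, sum_nthRootsFinset_inv_one_sub_mul_pow hr hq,
    hω.sum_nthRootsFinset_geom_sum_sq hr]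
  simp only [pow_one]
  rw [hω.sum_nthRootsFinset_geom_sum le_rfl, if_neg (by omega)]
  field_simp
  linear_combination -hcube
end

section
/- Define b(r, x) := (r² − 1)/(1 − x) + 3/(1 − x)² − 2/(1 − x)³. For every integer M ≥ 1, every function g : ℕ → ℂ, and every q ∈ ℂ with q^M ≠ 1, one has Σ_{r ∣ M} g(M/r) · b(r, q^r) = Σ_{r ∣ M} Σ_ζ [ (M·G_{−1}(M/r) − M^{−3}·G₃(M/r)) / (1 − ζq) + (3·M^{−3}·G₃(M/r)) / (1 − ζq)² − (2·M^{−3}·G₃(M/r)) / (1 − ζq)³ ], where r runs over the positive divisors of M, the inner sum runs over the primitive r-th roots of unity ζ in ℂ, and G_γ(d) := Σ_{k ∣ d} k^γ · g(k) (sum over positive divisors k of d; in particular G_{−1}(d) = Σ_{k ∣ d} g(k)/k). -/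
/-!
Write `b(r, x) = r²/(1 − x) − Li₋₂(x)` with `Li₋₂(y) = y (1 + y)/(1 − y)³`. The two pieces satisfy
the distribution relations `Σ_{ζʳ = 1} (1 − ζq)⁻¹ = r (1 − qʳ)⁻¹` (expand `(1 − ζq)⁻¹` as a
geometric sum of length `r` over `1 − qʳ`) and `Σ_{ζʳ = 1} Li₋₂(ζq) = r³ Li₋₂(qʳ)` (apply `q d/dq`
twice to the first), so the `r`-th term on the left is a sum over all `r`-th roots of unity.
Sorting these by their exact order `d ∣ r` and exchanging the sums over `d ∣ r ∣ M` produces the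
divisor sums `G₋₁` and `G₃`.
-/

open Finset Polynomial

/-- The multiple-cover function `b(r, x) = (r² − 1)/(1 − x) + 3/(1 − x)² − 2/(1 − x)³`. -/
noncomputable def mcB (r : ℕ) (x : ℂ) : ℂ :=
  ((r : ℂ) ^ 2 - 1) / (1 - x) + 3 / (1 - x) ^ 2 - 2 / (1 - x) ^ 3

/-- `G_γ(d) = Σ_{k ∣ d} k^γ · g(k)`, sum over positive divisors `k` of `d`. -/
noncomputable def GVsum (g : ℕ → ℂ) (γ : ℤ) (d : ℕ) : ℂ :=
  ∑ k ∈ d.divisors, (k : ℂ) ^ γ * g k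

theorem sum_pow_nthRootsFinset_eq_zero {K : Type*} [Field K] {r n : ℕ} {ω : K}
    (hω : IsPrimitiveRoot ω r) (hn : ¬ r ∣ n) :
    ∑ ζ ∈ nthRootsFinset r (1 : K), ζ ^ n = 0 := by
  rcases Nat.eq_zero_or_pos r with rfl | hr
  · simp [nthRootsFinset_zero]
  have hω0 : ω ≠ 0 := hω.ne_zero hr.ne'
  have hω' : ω⁻¹ ∈ nthRootsFinset r (1 : K) := by
    rw [mem_nthRootsFinset hr, inv_pow, hω.pow_eq_one, inv_one]
  have hmul : ∀ {a ζ : K}, a ∈ nthRootsFinset r (1 : K) → ζ ∈ nthRootsFinset r (1 : K) →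
      a * ζ ∈ nthRootsFinset r (1 : K) := fun ha hζ => by
    simpa using mul_mem_nthRootsFinset ha hζ
  -- multiplication by `ω` permutes the `r`-th roots of unity
  have hperm : ∑ ζ ∈ nthRootsFinset r (1 : K), (ω * ζ) ^ n =
      ∑ ζ ∈ nthRootsFinset r (1 : K), ζ ^ n :=
    sum_nbij' (ω * ·) (ω⁻¹ * ·) (fun _ hζ => hmul (hω.mem_nthRootsFinset hr) hζ)
      (fun _ hζ => hmul hω' hζ) (fun _ _ => inv_mul_cancel_left₀ hω0 _)
      (fun _ _ => mul_inv_cancel_left₀ hω0 _) (fun _ _ => rfl)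
  simp only [mul_pow, ← mul_sum] at hperm
  by_contra hsum
  exact hn (hω.dvd_of_pow_eq_one n ((mul_eq_right₀ hsum).1 hperm))

theorem sum_inv_one_sub_mul_nthRootsFinset {r : ℕ} (hr : 0 < r) {q : ℂ} (hq : q ^ r ≠ 1) :
    ∑ ζ ∈ nthRootsFinset r (1 : ℂ), (1 - ζ * q)⁻¹ = r * (1 - q ^ r)⁻¹ := by
  have hω := Complex.isPrimitiveRoot_exp r hr.ne'
  have hq' : 1 - q ^ r ≠ 0 := sub_ne_zero.2 hq.symm
  have hgeom : ∀ ζ ∈ nthRootsFinset r (1 : ℂ),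
      (1 - ζ * q)⁻¹ = (∑ n ∈ range r, (ζ * q) ^ n) * (1 - q ^ r)⁻¹ := by
    intro ζ hζ
    refine inv_eq_of_mul_eq_one_right ?_
    rw [← mul_assoc, mul_neg_geom_sum, mul_pow, (mem_nthRootsFinset hr 1).1 hζ, one_mul,
      mul_inv_cancel₀ hq']
  have hpow : ∀ n ∈ range r, n ≠ 0 → ∑ ζ ∈ nthRootsFinset r (1 : ℂ), ζ ^ n * q ^ n = 0 :=
    fun n hn hn0 => by
      rw [← sum_mul, sum_pow_nthRootsFinset_eq_zero hω
        (Nat.not_dvd_of_pos_of_lt (Nat.pos_of_ne_zero hn0) (mem_range.1 hn)), zero_mul]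
  simp_rw [sum_congr rfl hgeom, ← sum_mul, mul_pow]
  rw [sum_comm, sum_eq_single_of_mem 0 (mem_range.2 hr) hpow]
  simp [hω.card_nthRootsFinset]

/-- Averaging over the `r`-th roots of unity commutes with the Euler operator `D = y d/dy`,
and `D (f (y ^ r)) = r (D f) (y ^ r)`. -/
theorem sum_nthRootsFinset_mul_deriv {r : ℕ} (hr : 0 < r) {f f' : ℂ → ℂ} {c : ℂ}
    (hf : ∀ y, y ≠ 1 → HasDerivAt f (f' y) y)
    (hsum : ∀ q : ℂ, q ^ r ≠ 1 → ∑ ζ ∈ nthRootsFinset r (1 : ℂ), f (ζ * q) = c * f (q ^ r))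
    {q : ℂ} (hq : q ^ r ≠ 1) :
    ∑ ζ ∈ nthRootsFinset r (1 : ℂ), ζ * q * f' (ζ * q) = r * c * (q ^ r * f' (q ^ r)) := by
  have hroot : ∀ ζ ∈ nthRootsFinset r (1 : ℂ), ζ * q ≠ 1 := fun ζ hζ h => hq <| by
    rw [← one_pow r, ← h, mul_pow, (mem_nthRootsFinset hr 1).1 hζ, one_mul]
  have hL : HasDerivAt (fun p => ∑ ζ ∈ nthRootsFinset r (1 : ℂ), f (ζ * p))
      (∑ ζ ∈ nthRootsFinset r (1 : ℂ), f' (ζ * q) * ζ) q :=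
    HasDerivAt.fun_sum fun ζ hζ =>
      (hf _ (hroot ζ hζ)).comp q (by simpa using (hasDerivAt_id q).const_mul ζ)
  have hR : HasDerivAt (fun p => c * f (p ^ r)) (c * (f' (q ^ r) * (r * q ^ (r - 1)))) q :=
    ((hf _ hq).comp q (hasDerivAt_pow r q)).const_mul c
  have hLR : (fun p => ∑ ζ ∈ nthRootsFinset r (1 : ℂ), f (ζ * p)) =ᶠ[nhds q]
      fun p => c * f (p ^ r) := by
    filter_upwards [(isOpen_ne_fun (continuous_pow r) continuous_const).mem_nhds hq] with p hp
    exact hsum p hp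
  calc ∑ ζ ∈ nthRootsFinset r (1 : ℂ), ζ * q * f' (ζ * q)
      = q * ∑ ζ ∈ nthRootsFinset r (1 : ℂ), f' (ζ * q) * ζ := by
        rw [mul_sum]; exact sum_congr rfl fun _ _ => by ring
    _ = r * c * (q * q ^ (r - 1) * f' (q ^ r)) := by
        rw [hL.unique (hR.congr_of_eventuallyEq hLR)]; ring
    _ = r * c * (q ^ r * f' (q ^ r)) := by
        rw [← pow_succ', Nat.sub_add_cancel hr]

theorem hasDerivAt_inv_one_sub {y : ℂ} (hy : y ≠ 1) :
    HasDerivAt (fun y => (1 - y)⁻¹) ((1 - y) ^ 2)⁻¹ y :=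
  (((hasDerivAt_id' y).const_sub 1).fun_inv (sub_ne_zero.2 hy.symm)).congr_deriv (by ring)

theorem hasDerivAt_div_one_sub_sq {y : ℂ} (hy : y ≠ 1) :
    HasDerivAt (fun y => y / (1 - y) ^ 2) ((1 + y) / (1 - y) ^ 3) y := by
  have hy' : 1 - y ≠ 0 := sub_ne_zero.2 hy.symm
  refine ((hasDerivAt_id' y).fun_div (((hasDerivAt_id' y).const_sub 1).fun_pow 2)
    (pow_ne_zero 2 hy')).congr_deriv ?_
  field_simp
  ring

/-- The polylogarithm `Li₋₂(y) = Σ_{n ≥ 1} n² yⁿ`. -/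
noncomputable def polylogNegTwo (y : ℂ) : ℂ := y * (1 + y) / (1 - y) ^ 3

theorem polylogNegTwo_eq (y : ℂ) :
    polylogNegTwo y = (1 - y)⁻¹ - 3 / (1 - y) ^ 2 + 2 / (1 - y) ^ 3 := by
  rcases eq_or_ne y 1 with rfl | hy
  · simp [polylogNegTwo]
  have hy' : 1 - y ≠ 0 := sub_ne_zero.2 hy.symm
  rw [polylogNegTwo]
  field_simp
  ring

theorem mcB_eq (r : ℕ) (x : ℂ) : mcB r x = (r : ℂ) ^ 2 * (1 - x)⁻¹ - polylogNegTwo x := by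
  rw [mcB, polylogNegTwo_eq]
  ring

theorem sum_polylogNegTwo_nthRootsFinset {r : ℕ} (hr : 0 < r) {q : ℂ} (hq : q ^ r ≠ 1) :
    ∑ ζ ∈ nthRootsFinset r (1 : ℂ), polylogNegTwo (ζ * q) = r ^ 3 * polylogNegTwo (q ^ r) := by
  have hLiNegOne : ∀ q : ℂ, q ^ r ≠ 1 →
      ∑ ζ ∈ nthRootsFinset r (1 : ℂ), ζ * q / (1 - ζ * q) ^ 2 = r * r * (q ^ r / (1 - q ^ r) ^ 2) :=
    fun q hq => by
      simpa only [div_eq_mul_inv] using sum_nthRootsFinset_mul_deriv hr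
        (fun _ hy => hasDerivAt_inv_one_sub hy)
        (fun q hq => sum_inv_one_sub_mul_nthRootsFinset hr hq) hq
  have h := sum_nthRootsFinset_mul_deriv hr (fun _ hy => hasDerivAt_div_one_sub_sq hy)
    hLiNegOne hq
  simp only [polylogNegTwo, mul_div_assoc, h]
  ring

theorem mcB_pow_eq_sum_nthRootsFinset {r : ℕ} (hr : 0 < r) {q : ℂ} (hq : q ^ r ≠ 1) :
    mcB r (q ^ r) = (r : ℂ) ^ (1 : ℤ) * ∑ ζ ∈ nthRootsFinset r (1 : ℂ), (1 - ζ * q)⁻¹ -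
      (r : ℂ) ^ (-3 : ℤ) * ∑ ζ ∈ nthRootsFinset r (1 : ℂ), polylogNegTwo (ζ * q) := by
  have hr' : (r : ℂ) ≠ 0 := Nat.cast_ne_zero.2 hr.ne'
  rw [sum_inv_one_sub_mul_nthRootsFinset hr hq, sum_polylogNegTwo_nthRootsFinset hr hq, mcB_eq,
    zpow_one, zpow_neg, zpow_ofNat]
  field_simp

theorem Nat.mem_divisors_and_mem_divisors_div {M k d : ℕ} :
    k ∈ M.divisors ∧ d ∈ (M / k).divisors ↔ k * d ∣ M ∧ M ≠ 0 := by
  simp only [Nat.mem_divisors]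
  constructor
  · rintro ⟨⟨hk, hM⟩, hd, -⟩
    exact ⟨(Nat.dvd_div_iff_mul_dvd hk).1 hd, hM⟩
  · rintro ⟨hkd, hM⟩
    have hk : k ∣ M := dvd_of_mul_right_dvd hkd
    refine ⟨⟨hk, hM⟩, (Nat.dvd_div_iff_mul_dvd hk).2 hkd, ?_⟩
    exact (Nat.div_ne_zero_iff_of_dvd hk).2 ⟨hM, ne_zero_of_dvd_ne_zero hM hk⟩

theorem sum_divisors_sum_divisors {α : Type*} [AddCommMonoid α] (M : ℕ) (F : ℕ → ℕ → α) :
    ∑ r ∈ M.divisors, ∑ d ∈ r.divisors, F r d =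
      ∑ d ∈ M.divisors, ∑ k ∈ (M / d).divisors, F (M / k) d := by
  rw [← Nat.sum_div_divisors M fun r => ∑ d ∈ r.divisors, F r d]
  refine sum_comm' fun k d => ?_
  rw [Nat.mem_divisors_and_mem_divisors_div, and_comm (a := k ∈ (M / d).divisors),
    Nat.mem_divisors_and_mem_divisors_div, mul_comm]

theorem sum_divisors_zpow_mul_sum_nthRootsFinset (M : ℕ) (g : ℕ → ℂ) (γ : ℤ) (f : ℂ → ℂ) :
    ∑ r ∈ M.divisors, g (M / r) * (r : ℂ) ^ γ * ∑ ζ ∈ nthRootsFinset r (1 : ℂ), f ζ =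
      ∑ d ∈ M.divisors, (M : ℂ) ^ γ * GVsum g (-γ) (M / d) * ∑ ζ ∈ primitiveRoots d ℂ, f ζ := by
  have hroots : ∀ r, ∑ ζ ∈ nthRootsFinset r (1 : ℂ), f ζ =
      ∑ d ∈ r.divisors, ∑ ζ ∈ primitiveRoots d ℂ, f ζ := fun r => by
    rw [IsPrimitiveRoot.nthRoots_one_eq_biUnion_primitiveRoots,
      sum_biUnion fun _ _ _ _ => IsPrimitiveRoot.disjoint]
  simp_rw [hroots, mul_sum (s := Nat.divisors _) (R := ℂ) (ι := ℕ)]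
  rw [sum_divisors_sum_divisors (α := ℂ)]
  refine sum_congr rfl fun d hd => ?_
  rw [← sum_mul]
  congr 1
  rw [GVsum, mul_sum]
  refine sum_congr rfl fun k hk => ?_
  have hM : M ≠ 0 := (Nat.mem_divisors.1 hd).2
  have hkM : k ∣ M :=
    (Nat.dvd_of_mem_divisors hk).trans (Nat.div_dvd_of_dvd (Nat.dvd_of_mem_divisors hd))
  have hk : (k : ℂ) ≠ 0 := Nat.cast_ne_zero.2 (ne_zero_of_dvd_ne_zero hM hkM)
  rw [Nat.div_div_self hkM hM, Nat.cast_div hkM hk, div_zpow, zpow_neg]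
  ring

theorem stmt_5_general (M : ℕ) (g : ℕ → ℂ) (q : ℂ) (hq : q ^ M ≠ 1) :
    ∑ r ∈ M.divisors, g (M / r) * mcB r (q ^ r) =
      ∑ r ∈ M.divisors, ∑ ζ ∈ primitiveRoots r ℂ,
        (((M : ℂ) * GVsum g (-1) (M / r) - (M : ℂ) ^ (-3 : ℤ) * GVsum g 3 (M / r)) /
            (1 - ζ * q) +
          (3 * (M : ℂ) ^ (-3 : ℤ) * GVsum g 3 (M / r)) / (1 - ζ * q) ^ 2 -
          (2 * (M : ℂ) ^ (-3 : ℤ) * GVsum g 3 (M / r)) / (1 - ζ * q) ^ 3) := by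
  have hqr : ∀ r ∈ M.divisors, q ^ r ≠ 1 := fun r hr h => hq <| by
    obtain ⟨k, rfl⟩ := Nat.dvd_of_mem_divisors hr
    rw [pow_mul, h, one_pow]
  calc ∑ r ∈ M.divisors, g (M / r) * mcB r (q ^ r)
      = ∑ r ∈ M.divisors, g (M / r) * (r : ℂ) ^ (1 : ℤ) *
            ∑ ζ ∈ nthRootsFinset r (1 : ℂ), (1 - ζ * q)⁻¹ -
          ∑ r ∈ M.divisors, g (M / r) * (r : ℂ) ^ (-3 : ℤ) *
            ∑ ζ ∈ nthRootsFinset r (1 : ℂ), polylogNegTwo (ζ * q) := by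
        rw [← sum_sub_distrib]
        refine sum_congr rfl fun r hr => ?_
        rw [mcB_pow_eq_sum_nthRootsFinset (Nat.pos_of_mem_divisors hr) (hqr r hr)]
        ring
    _ = ∑ d ∈ M.divisors, ((M : ℂ) ^ (1 : ℤ) * GVsum g (-1) (M / d) *
            ∑ ζ ∈ primitiveRoots d ℂ, (1 - ζ * q)⁻¹ -
          (M : ℂ) ^ (-3 : ℤ) * GVsum g 3 (M / d) *
            ∑ ζ ∈ primitiveRoots d ℂ, polylogNegTwo (ζ * q)) := by
        rw [sum_divisors_zpow_mul_sum_nthRootsFinset, sum_divisors_zpow_mul_sum_nthRootsFinset,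
          neg_neg, sum_sub_distrib]
    _ = _ := by
        refine sum_congr rfl fun d _ => ?_
        simp only [mul_sum, ← sum_sub_distrib, polylogNegTwo_eq, zpow_one]
        exact sum_congr rfl fun ζ _ => by ring

/-- Partial fraction expansion of the `b`-part:
`Σ_{r ∣ M} g(M/r)·b(r, q^r)
  = Σ_{r ∣ M} Σ_ζ [ (M·G₋₁(M/r) − M⁻³·G₃(M/r))/(1 − ζq)
      + 3M⁻³·G₃(M/r)/(1 − ζq)² − 2M⁻³·G₃(M/r)/(1 − ζq)³ ]`,
the inner sum running over the primitive `r`-th roots of unity `ζ` in `ℂ`. -/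
theorem stmt_5 (M : ℕ) (hM : 1 ≤ M) (g : ℕ → ℂ) (q : ℂ) (hq : q ^ M ≠ 1) :
    ∑ r ∈ M.divisors, g (M / r) * mcB r (q ^ r) =
      ∑ r ∈ M.divisors, ∑ ζ ∈ primitiveRoots r ℂ,
        (((M : ℂ) * GVsum g (-1) (M / r) - (M : ℂ) ^ (-3 : ℤ) * GVsum g 3 (M / r)) /
            (1 - ζ * q) +
          (3 * (M : ℂ) ^ (-3 : ℤ) * GVsum g 3 (M / r)) / (1 - ζ * q) ^ 2 -
          (2 * (M : ℂ) ^ (-3 : ℤ) * GVsum g 3 (M / r)) / (1 - ζ * q) ^ 3) :=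
  stmt_5_general M g q hq
end

section
/- Define c(r, q, τ) := τ/(r(1 − q)(1 − q^r)) + (e^τ − 1 − τ)/(r²(1 − q)²). For every integer M ≥ 1, every function g : ℕ → ℂ, every τ ∈ ℂ, and every q ∈ ℂ with q^M ≠ 1, one has (1 − q) · Σ_{r ∣ M} (M/r) · g(M/r) · c(r, q, (M/r)·τ) = M^{−2} · ( Σ_{k ∣ M} k³ (e^{kτ} − 1) g(k) ) / (1 − q) + τ · M^{−2} · Σ_{r ∣ M, r ≥ 2} Σ_ζ G₄(M/r) / (1 − ζq), where r runs over the positive divisors of M, the inner sum runs over the primitive r-th roots of unity ζ in ℂ, and G₄(d) := Σ_{k ∣ d} k⁴ · g(k) (sum over positive divisors k of d). -/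
/-!
By definition of `c`, each term of the sum splits into a pole along `q ^ r = 1` and a pole at
`q = 1`. Since `(ζ q) ^ r = q ^ r` for an `r`-th root of unity `ζ`, expanding `1 / (1 - ζ q)` as a
truncated geometric series and using orthogonality of the characters `ζ ↦ ζ ^ j` gives
`∑_{ζ ^ r = 1} 1 / (1 - ζ q) = r / (1 - q ^ r)`. Grouping the roots by their order, this is the
Dirichlet convolution of `d ↦ ∑_{ζ primitive of order d} 1 / (1 - ζ q)` with the constant
function `1`, and associativity of Dirichlet convolution moves that divisor sum onto `g`, producing
`G₄`. The `d = 1` term of the result, `G₄(M) / (1 - q)`, cancels the contribution of the `-kτ` in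
`e^{kτ} - 1 - kτ`.
-/

open Finset

/-- The multiple-cover function `c(r, q, τ)`. -/
noncomputable def mcC (r : ℕ) (q τ : ℂ) : ℂ :=
  τ / ((r : ℂ) * (1 - q) * (1 - q ^ r)) +
    (Complex.exp τ - 1 - τ) / ((r : ℂ) ^ 2 * (1 - q) ^ 2)

/-- The divisor sum `G₄(d)`. -/
noncomputable def GVsum4 (g : ℕ → ℂ) (d : ℕ) : ℂ :=
  ∑ k ∈ d.divisors, (k : ℂ) ^ 4 * g k

open Polynomial ArithmeticFunction

namespace IsPrimitiveRoot

variable {K : Type*} [Field K] {μ : K} {r : ℕ}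

theorem sum_range_pow_pow (hμ : IsPrimitiveRoot μ r) (j : ℕ) :
    ∑ i ∈ range r, (μ ^ j) ^ i = if r ∣ j then (r : K) else 0 := by
  split_ifs with hj
  · simp [(hμ.pow_eq_one_iff_dvd j).2 hj]
  · rw [geom_sum_eq (mt (hμ.pow_eq_one_iff_dvd j).1 hj), ← pow_mul, mul_comm, pow_mul,
      hμ.pow_eq_one, one_pow, sub_self, zero_div]

theorem sum_nthRootsFinset_one_eq_sum_range {M : Type*} [AddCommMonoid M]
    (hμ : IsPrimitiveRoot μ r) (f : K → M) :
    ∑ ζ ∈ nthRootsFinset r (1 : K), f ζ = ∑ i ∈ range r, f (μ ^ i) := by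
  rcases r.eq_zero_or_pos with rfl | hr
  · simp
  have : NeZero r := ⟨hr.ne'⟩
  refine (Finset.sum_nbij (μ ^ ·) (fun i _ => ?_) hμ.injOn_pow (fun ξ hξ => ?_)
    (fun _ _ => rfl)).symm
  · rw [Polynomial.mem_nthRootsFinset hr, ← pow_mul, mul_comm, pow_mul, hμ.pow_eq_one, one_pow]
  · obtain ⟨i, hi, rfl⟩ := hμ.eq_pow_of_pow_eq_one ((Polynomial.mem_nthRootsFinset hr _).1 hξ)
    exact ⟨i, mem_range.2 hi, rfl⟩

theorem sum_nthRootsFinset_inv_one_sub_mul (hμ : IsPrimitiveRoot μ r) {q : K} (hq : q ^ r ≠ 1) :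
    ∑ ζ ∈ nthRootsFinset r (1 : K), (1 - ζ * q)⁻¹ = r / (1 - q ^ r) := by
  have hr : 0 < r := Nat.pos_of_ne_zero (by rintro rfl; exact hq (pow_zero q))
  have hqr : 1 - q ^ r ≠ 0 := sub_ne_zero.2 (Ne.symm hq)
  have geom (i : ℕ) : (1 - μ ^ i * q)⁻¹ = (∑ j ∈ range r, (μ ^ i * q) ^ j) / (1 - q ^ r) := by
    have h := geom_sum_mul_neg (μ ^ i * q) r
    rw [mul_pow, ← pow_mul, mul_comm i, pow_mul, hμ.pow_eq_one, one_pow, one_mul] at h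
    rw [eq_div_iff hqr, ← h, mul_comm, mul_inv_cancel_right₀ (right_ne_zero_of_mul (h ▸ hqr))]
  have swap : ∑ i ∈ range r, ∑ j ∈ range r, (μ ^ i * q) ^ j
      = ∑ j ∈ range r, (∑ i ∈ range r, (μ ^ j) ^ i) * q ^ j := by
    rw [sum_comm]
    simp_rw [sum_mul, mul_pow, ← pow_mul, mul_comm]
  rw [hμ.sum_nthRootsFinset_one_eq_sum_range (fun ζ => (1 - ζ * q)⁻¹),
    sum_congr rfl fun i _ => geom i, ← sum_div, swap]
  simp_rw [hμ.sum_range_pow_pow]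
  congr 1
  rw [sum_eq_single_of_mem 0 (mem_range.2 hr)]
  · simp
  · intro j hj hj0
    rw [if_neg fun h => hj0 (Nat.eq_zero_of_dvd_of_lt h (mem_range.1 hj)), zero_mul]

end IsPrimitiveRoot

theorem Nat.sum_divisors_eq_add_sum_filter_two_le {M : Type*} [AddCommMonoid M] {n : ℕ}
    (hn : n ≠ 0) (F : ℕ → M) :
    ∑ d ∈ n.divisors, F d = F 1 + ∑ d ∈ n.divisors.filter (2 ≤ ·), F d := by
  have : n.divisors.filter (2 ≤ ·) = n.divisors.erase 1 := by
    ext d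
    simp only [mem_filter, mem_erase, Nat.mem_divisors]
    constructor
    · rintro ⟨hd, h2⟩; exact ⟨by omega, hd⟩
    · rintro ⟨h1, hd, -⟩
      exact ⟨⟨hd, hn⟩, by have := Nat.pos_of_dvd_of_pos hd (Nat.pos_of_ne_zero hn); omega⟩
  rw [this, add_sum_erase _ _ (Nat.one_mem_divisors.2 hn)]

namespace ArithmeticFunction

variable {R : Type*} [Semiring R]

theorem sum_divisors_sum_divisors_mul (f g : ArithmeticFunction R) (n : ℕ) :
    ∑ r ∈ n.divisors, (∑ d ∈ r.divisors, f d) * g (n / r)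
      = ∑ d ∈ n.divisors, f d * ∑ k ∈ (n / d).divisors, g k := by
  have h : (f * zeta * g) n = (f * (zeta * g)) n := by rw [mul_assoc]
  rw [mul_apply, mul_apply, Nat.sum_divisorsAntidiagonal (fun a b => (f * zeta) a * g b),
    Nat.sum_divisorsAntidiagonal (fun a b => f a * (zeta * g) b)] at h
  simpa only [coe_mul_zeta_apply, coe_zeta_mul_apply] using h

variable {K : Type*} [Field K]

noncomputable def primitiveRootPoles (q : K) : ArithmeticFunction K :=
  ⟨fun d => ∑ ζ ∈ primitiveRoots d K, (1 - ζ * q)⁻¹, by simp⟩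

theorem primitiveRootPoles_apply (q : K) (d : ℕ) :
    primitiveRootPoles q d = ∑ ζ ∈ primitiveRoots d K, (1 - ζ * q)⁻¹ := rfl

theorem primitiveRootPoles_one (q : K) : primitiveRootPoles q 1 = (1 - q)⁻¹ := by
  simp [primitiveRootPoles_apply, IsPrimitiveRoot.primitiveRoots_one]

theorem primitiveRootPoles_mul_zeta_apply {μ : K} {r : ℕ} (hμ : IsPrimitiveRoot μ r) {q : K}
    (hq : q ^ r ≠ 1) : (primitiveRootPoles q * zeta) r = r / (1 - q ^ r) := by
  classical
  rw [coe_mul_zeta_apply, ← hμ.sum_nthRootsFinset_inv_one_sub_mul hq,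
    IsPrimitiveRoot.nthRoots_one_eq_biUnion_primitiveRoots,
    sum_biUnion fun _ _ _ _ hij => IsPrimitiveRoot.disjoint hij]
  rfl

end ArithmeticFunction

theorem one_sub_mul_mul_mcC {M r : ℕ} {q : ℂ} (τ : ℂ) (hr : r ∈ M.divisors) (hq : q ^ M ≠ 1) :
    (1 - q) * (((M / r : ℕ) : ℂ) * mcC r q (((M / r : ℕ) : ℂ) * τ)) =
      (τ * ((M / r : ℕ) : ℂ) ^ 4 * (primitiveRootPoles q * zeta) r +
        ((M / r : ℕ) : ℂ) ^ 3 * (Complex.exp (((M / r : ℕ) : ℂ) * τ) - 1 - ((M / r : ℕ) : ℂ) * τ)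
          / (1 - q)) / (M : ℂ) ^ 2 := by
  obtain ⟨⟨k, hk⟩, hM0⟩ := Nat.mem_divisors.1 hr
  have hr0 : r ≠ 0 := (Nat.pos_of_mem_divisors hr).ne'
  have hq1 : (1 : ℂ) - q ≠ 0 := sub_ne_zero.2 fun h => hq (by rw [← h, one_pow])
  have hqr : q ^ r ≠ 1 := fun h => hq (by rw [hk, pow_mul, h, one_pow])
  have hqr' : (1 : ℂ) - q ^ r ≠ 0 := sub_ne_zero.2 (Ne.symm hqr)
  have hk0 : ((M / r : ℕ) : ℂ) ≠ 0 :=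
    Nat.cast_ne_zero.2 ((Nat.div_ne_zero_iff_of_dvd ⟨k, hk⟩).2 ⟨hM0, hr0⟩)
  have hr0' : (r : ℂ) ≠ 0 := Nat.cast_ne_zero.2 hr0
  have hMr : ((M / r : ℕ) : ℂ) * r = M := by exact_mod_cast Nat.div_mul_cancel ⟨k, hk⟩
  rw [primitiveRootPoles_mul_zeta_apply (Complex.isPrimitiveRoot_exp r hr0) hqr, ← hMr, mcC]
  field_simp

theorem sum_divisors_primitiveRootPoles_mul_zeta_mul_pow_four (g : ℕ → ℂ) {M : ℕ} (hM : M ≠ 0)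
    (q : ℂ) :
    ∑ r ∈ M.divisors, (primitiveRootPoles q * zeta) r * (((M / r : ℕ) : ℂ) ^ 4 * g (M / r)) =
      GVsum4 g M / (1 - q) + ∑ r ∈ M.divisors.filter (fun r => 2 ≤ r),
        ∑ ζ ∈ primitiveRoots r ℂ, GVsum4 g (M / r) / (1 - ζ * q) := by
  let f : ArithmeticFunction ℂ := ⟨fun k => (k : ℂ) ^ 4 * g k, by simp⟩
  have hG (n : ℕ) : ∑ k ∈ n.divisors, f k = GVsum4 g n := rfl
  simp_rw [coe_mul_zeta_apply]
  refine (sum_divisors_sum_divisors_mul (primitiveRootPoles q) f M).trans ?_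
  rw [Nat.sum_divisors_eq_add_sum_filter_two_le hM, primitiveRootPoles_one, Nat.div_one]
  simp only [hG, primitiveRootPoles_apply, sum_mul, div_eq_inv_mul]

theorem stmt_6_general (M : ℕ) (g : ℕ → ℂ) (τ : ℂ) (q : ℂ) (hq : q ^ M ≠ 1) :
    (1 - q) * ∑ r ∈ M.divisors, ((M / r : ℕ) : ℂ) * g (M / r) * mcC r q (((M / r : ℕ) : ℂ) * τ) =
      (M : ℂ) ^ (-2 : ℤ) *
          (∑ k ∈ M.divisors, (k : ℂ) ^ 3 * (Complex.exp ((k : ℂ) * τ) - 1) * g k) / (1 - q) +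
        τ * (M : ℂ) ^ (-2 : ℤ) *
          ∑ r ∈ M.divisors.filter (fun r => 2 ≤ r), ∑ ζ ∈ primitiveRoots r ℂ,
            GVsum4 g (M / r) / (1 - ζ * q) := by
  have hM0 : M ≠ 0 := by rintro rfl; exact hq (pow_zero q)
  have hq1 : (1 : ℂ) - q ≠ 0 := sub_ne_zero.2 fun h => hq (by rw [← h, one_pow])
  have term (r : ℕ) (hr : r ∈ M.divisors) :
      (1 - q) * (((M / r : ℕ) : ℂ) * g (M / r) * mcC r q (((M / r : ℕ) : ℂ) * τ)) =
        (τ * ((primitiveRootPoles q * zeta) r * (((M / r : ℕ) : ℂ) ^ 4 * g (M / r))) +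
          ((M / r : ℕ) : ℂ) ^ 3 * g (M / r) *
            (Complex.exp (((M / r : ℕ) : ℂ) * τ) - 1 - ((M / r : ℕ) : ℂ) * τ) / (1 - q)) /
          M ^ 2 := by
    linear_combination g (M / r) * one_sub_mul_mul_mcC τ hr hq
  have linear_part : ∑ r ∈ M.divisors, ((M / r : ℕ) : ℂ) ^ 3 * g (M / r) *
      (Complex.exp (((M / r : ℕ) : ℂ) * τ) - 1 - ((M / r : ℕ) : ℂ) * τ) =
        ∑ k ∈ M.divisors, (k : ℂ) ^ 3 * (Complex.exp ((k : ℂ) * τ) - 1) * g k - τ * GVsum4 g M := by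
    rw [Nat.sum_div_divisors M (fun k => (k : ℂ) ^ 3 * g k * (Complex.exp (k * τ) - 1 - k * τ)),
      GVsum4, mul_sum, ← sum_sub_distrib]
    exact sum_congr rfl fun k _ => by ring
  rw [mul_sum, sum_congr rfl term, ← sum_div, sum_add_distrib, ← mul_sum, ← sum_div,
    sum_divisors_primitiveRootPoles_mul_zeta_mul_pow_four g hM0, linear_part, zpow_neg, zpow_two]
  field_simp
  ring

/-- Partial fraction expansion of the `c`-part:
`(1 − q)·Σ_{r ∣ M} (M/r)·g(M/r)·c(r, q, (M/r)τ)
  = M⁻²·(Σ_{k ∣ M} k³(e^{kτ} − 1)g(k))/(1 − q)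
    + τ·M⁻²·Σ_{r ∣ M, r ≥ 2} Σ_ζ G₄(M/r)/(1 − ζq)`,
the inner sum running over the primitive `r`-th roots of unity `ζ` in `ℂ`. -/
theorem stmt_6 (M : ℕ) (hM : 1 ≤ M) (g : ℕ → ℂ) (τ : ℂ) (q : ℂ) (hq : q ^ M ≠ 1) :
    (1 - q) * ∑ r ∈ M.divisors, ((M / r : ℕ) : ℂ) * g (M / r) * mcC r q (((M / r : ℕ) : ℂ) * τ) =
      (M : ℂ) ^ (-2 : ℤ) *
          (∑ k ∈ M.divisors, (k : ℂ) ^ 3 * (Complex.exp ((k : ℂ) * τ) - 1) * g k) / (1 - q) +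
        τ * (M : ℂ) ^ (-2 : ℤ) *
          ∑ r ∈ M.divisors.filter (fun r => 2 ≤ r), ∑ ζ ∈ primitiveRoots r ℂ,
            GVsum4 g (M / r) / (1 - ζ * q) :=
  stmt_6_general M g τ q hq
end

section
/- Let F = ℚ(q) be the field of rational functions in one variable q over ℚ, and let A := F[P, T]/((1 − P)², (1 − PT)²(1 − T)). Then for every integer r ≥ 1 the elements q, PT and 1 − P·q^r are invertible in A, the element 1 − q^r is invertible in F, and the following identity holds in A: (1 − PT)² · ∏_{m=1}^{r−1}(1 − PT·q^m)² · ( (PT)^{2r} · q^{r(r−1)} · ∏_{m=1}^{r}(1 − P·q^m)² )^{−1} = ( Σ_{i=1}^{r−1} i·q^{−r(r−i)} )·(1 − PT)² + ( Σ_{i=1}^{r−1} i(2r − i + 1)·q^{−r(r−i)} )·(1 − PT)³ + ((1 − PT)² + (1 − PT)³)·( (r − 1)/(1 − q^r) + 1/(1 − q^r)² ) + (1 − PT)³·( (r² − 1)/(1 − q^r) + 3/(1 − q^r)² − 2/(1 − q^r)³ ). -/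
open Finset

/-- The field `F = ℚ(q)` of rational functions in one variable over `ℚ`. -/
abbrev Fq : Type := RatFunc ℚ

/-- The ideal `((1 − P)², (1 − PT)²(1 − T))` in `F[P, T]`, with `P = X 0`,
`T = X 1`. -/
noncomputable def relIdeal : Ideal (MvPolynomial (Fin 2) Fq) :=
  Ideal.span
    {(1 - MvPolynomial.X 0) ^ 2,
      (1 - MvPolynomial.X 0 * MvPolynomial.X 1) ^ 2 * (1 - MvPolynomial.X 1)}

/-- The ring `A = F[P, T]/((1 − P)², (1 − PT)²(1 − T))`. -/
noncomputable abbrev Aring : Type := MvPolynomial (Fin 2) Fq ⧸ relIdeal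

/-- The class `P ∈ A`. -/
noncomputable def Pcl : Aring := Ideal.Quotient.mk relIdeal (MvPolynomial.X 0)

/-- The class `T ∈ A`. -/
noncomputable def Tcl : Aring := Ideal.Quotient.mk relIdeal (MvPolynomial.X 1)

/-- The element `q ∈ A`, image of the rational-function variable `q ∈ F`. -/
noncomputable def qcl : Aring := algebraMap Fq Aring RatFunc.X

/-!
Write `u = 1 - P` and `v = 1 - PT`. The relations say `u² = 0` and `v² T = v²`, so multiplication
by `v²` only sees `PT` through `P`, and `v² u = v³`. Replacing `PT` by `P` after multiplying by
`v²`, the numerator `∏_{m<r} (1 - P q^m)²` cancels against the denominator, leaving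
`v² · (P^{2r} q^{r(r-1)} (1 - P q^r)²)⁻¹`. As `u² = 0`, this inverse is a first-order expansion
`c₀ + c₁ u` with `c₀ = q^{-r(r-1)} / (1 - q^r)²` and `c₁ = c₀ (2r - 2q^r / (1 - q^r))`, so the left
side is `c₀ v² + c₁ v³`. Splitting `c₀` and `c₁` into Laurent and polar parts in `x = q^r` is then
the closed form of `∑ i xⁱ` and `∑ i² xⁱ`.
-/

section SumFormulas

variable {R : Type*} [CommRing R]

theorem one_sub_sq_mul_sum_Icc_mul_pow (t : R) (n : ℕ) :
    (1 - t) ^ 2 * ∑ i ∈ Icc 1 n, (i : R) * t ^ i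
      = t - (n + 1) * t ^ (n + 1) + n * t ^ (n + 2) := by
  induction n with
  | zero => simp
  | succ k ih =>
    rw [sum_Icc_succ_top (Nat.le_add_left 1 k)]
    push_cast
    linear_combination ih

theorem one_sub_pow_three_mul_sum_Icc_sq_mul_pow (t : R) (n : ℕ) :
    (1 - t) ^ 3 * ∑ i ∈ Icc 1 n, (i : R) ^ 2 * t ^ i
      = t + t ^ 2 - (n + 1) ^ 2 * t ^ (n + 1) + (2 * n ^ 2 + 2 * n - 1) * t ^ (n + 2)
        - n ^ 2 * t ^ (n + 3) := by
  induction n with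
  | zero => simp
  | succ k ih =>
    rw [sum_Icc_succ_top (Nat.le_add_left 1 k)]
    push_cast
    linear_combination ih

end SumFormulas

section MultipleCover

variable {K : Type*} [Field K]

-- The paper's multiple-cover functions `a(r, x)` and `b(r, x)`, evaluated at `x = q^r`.
def multipleCoverA (r : ℕ) (x : K) : K := ((r : K) - 1) / (1 - x) + 1 / (1 - x) ^ 2

def multipleCoverB (r : ℕ) (x : K) : K :=
  ((r : K) ^ 2 - 1) / (1 - x) + 3 / (1 - x) ^ 2 - 2 / (1 - x) ^ 3

theorem sum_Icc_mul_zpow_sub {x : K} (hx : x ≠ 0) (f : ℕ → K) (r : ℕ) :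
    ∑ i ∈ Icc 1 (r - 1), f i * x ^ ((i : ℤ) - r) = (∑ i ∈ Icc 1 (r - 1), f i * x ^ i) / x ^ r := by
  rw [sum_div]
  refine sum_congr rfl fun i _ => ?_
  rw [zpow_sub₀ hx, zpow_natCast, zpow_natCast, mul_div_assoc]

theorem sum_add_multipleCoverA {x : K} (hx₀ : x ≠ 0) (hx₁ : x ≠ 1) (r : ℕ) :
    ∑ i ∈ Icc 1 (r - 1), (i : K) * x ^ ((i : ℤ) - r) + multipleCoverA r x
      = x ^ (1 - r : ℤ) / (1 - x) ^ 2 := by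
  have hx : 1 - x ≠ 0 := sub_ne_zero.mpr hx₁.symm
  rw [sum_Icc_mul_zpow_sub hx₀, multipleCoverA]
  rcases r with _ | n
  · simp only [Nat.zero_sub, Icc_eq_empty_of_lt zero_lt_one, sum_empty, Nat.cast_zero, sub_zero,
      zpow_one]
    field_simp
    ring
  · have hS : ∑ i ∈ Icc 1 n, (i : K) * x ^ i
        = (x - (n + 1) * x ^ (n + 1) + n * x ^ (n + 2)) / (1 - x) ^ 2 := by
      rw [eq_div_iff (pow_ne_zero 2 hx), mul_comm]
      exact one_sub_sq_mul_sum_Icc_mul_pow x n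
    rw [Nat.add_sub_cancel, hS, show (1 : ℤ) - (n + 1 : ℕ) = -n by push_cast; ring, zpow_neg,
      zpow_natCast]
    field_simp
    push_cast
    ring

theorem sum_add_multipleCoverA_add_multipleCoverB {x : K} (hx₀ : x ≠ 0) (hx₁ : x ≠ 1) (r : ℕ) :
    ∑ i ∈ Icc 1 (r - 1), ((i : K) * (2 * (r : K) - i + 1)) * x ^ ((i : ℤ) - r)
        + multipleCoverA r x + multipleCoverB r x
      = x ^ (1 - r : ℤ) / (1 - x) ^ 2 * (2 * r - 2 * x / (1 - x)) := by
  have hx : 1 - x ≠ 0 := sub_ne_zero.mpr hx₁.symm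
  have hsplit : ∑ i ∈ Icc 1 (r - 1), ((i : K) * (2 * (r : K) - i + 1)) * x ^ ((i : ℤ) - r)
      = (2 * r + 1) * ∑ i ∈ Icc 1 (r - 1), (i : K) * x ^ ((i : ℤ) - r)
        - ∑ i ∈ Icc 1 (r - 1), (i : K) ^ 2 * x ^ ((i : ℤ) - r) := by
    rw [mul_sum, ← sum_sub_distrib]
    exact sum_congr rfl fun i _ => by ring
  rw [hsplit, eq_sub_of_add_eq (sum_add_multipleCoverA hx₀ hx₁ r), sum_Icc_mul_zpow_sub hx₀,
    multipleCoverA, multipleCoverB]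
  rcases r with _ | n
  · simp only [Nat.zero_sub, Icc_eq_empty_of_lt zero_lt_one, sum_empty, Nat.cast_zero, sub_zero,
      zpow_one]
    field_simp
    ring
  · have hT : ∑ i ∈ Icc 1 n, (i : K) ^ 2 * x ^ i
        = (x + x ^ 2 - (n + 1) ^ 2 * x ^ (n + 1) + (2 * n ^ 2 + 2 * n - 1) * x ^ (n + 2)
          - n ^ 2 * x ^ (n + 3)) / (1 - x) ^ 3 := by
      rw [eq_div_iff (pow_ne_zero 3 hx), mul_comm]
      exact one_sub_pow_three_mul_sum_Icc_sq_mul_pow x n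
    rw [Nat.add_sub_cancel, hT, show (1 : ℤ) - (n + 1 : ℕ) = -n by push_cast; ring, zpow_neg,
      zpow_natCast]
    field_simp
    push_cast
    ring

end MultipleCover

section SquareZero

variable {R : Type*} [CommRing R]

theorem pow_eq_one_sub_mul_of_one_sub_sq_eq_zero {P : R} (hP : (1 - P) ^ 2 = 0) (k : ℕ) :
    P ^ k = 1 - k * (1 - P) := by
  induction k with
  | zero => simp
  | succ k ih =>
    rw [pow_succ, ih]
    push_cast
    linear_combination (k : R) * hP

theorem isUnit_mul_of_one_sub_sq_eq_zero {P T : R} (hP : (1 - P) ^ 2 = 0)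
    (hPT : (1 - P * T) ^ 2 * (1 - T) = 0) : IsUnit (P * T) := by
  have hnil : (1 - P * T) ^ 4 = 0 := by
    linear_combination ((1 - P * T + 1 - P) * P) * hPT + (1 - P * T) ^ 2 * hP
  simpa only [sub_sub_cancel] using IsNilpotent.isUnit_one_sub ⟨4, hnil⟩

theorem mul_eq_mul_of_mk_annihilator_eq {e a b : R}
    (h : Ideal.Quotient.mk (R ∙ e).annihilator a = Ideal.Quotient.mk (R ∙ e).annihilator b) :
    e * a = e * b := by
  rw [Ideal.Quotient.eq, Submodule.mem_annihilator_span_singleton, smul_eq_mul] at h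
  linear_combination h

theorem mk_annihilator_eq_one {e T : R} (h : e * (1 - T) = 0) :
    Ideal.Quotient.mk (R ∙ e).annihilator T = 1 := by
  rw [← map_one (Ideal.Quotient.mk _), Ideal.Quotient.eq, Submodule.mem_annihilator_span_singleton,
    smul_eq_mul]
  linear_combination -h

end SquareZero

section Algebra

variable {K R : Type*} [Field K] [CommRing R] [Algebra K R]

theorem isUnit_one_sub_mul_algebraMap {P : R} (hP : (1 - P) ^ 2 = 0) {s : K} (hs : s ≠ 1) :
    IsUnit (1 - P * algebraMap K R s) := by
  have hunit : IsUnit (algebraMap K R (1 - s)) :=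
    (isUnit_iff_ne_zero.mpr (sub_ne_zero.mpr hs.symm)).map _
  have hnil : IsNilpotent (algebraMap K R s * (1 - P)) := ⟨2, by rw [mul_pow, hP, mul_zero]⟩
  convert hnil.isUnit_add_left_of_commute hunit (Commute.all _ _) using 1
  rw [map_sub, map_one]
  ring

theorem pow_mul_one_sub_mul_sq_mul_eq_one {P : R} (hP : (1 - P) ^ 2 = 0) (r : ℕ) {x y : K}
    (hx : x ≠ 1) (hy : y ≠ 0) :
    P ^ (2 * r) * algebraMap K R y * (1 - P * algebraMap K R x) ^ 2 *
        (algebraMap K R (y * (1 - x) ^ 2)⁻¹ *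
          (1 + algebraMap K R (2 * r - 2 * x / (1 - x)) * (1 - P)))
      = 1 := by
  have h : 1 - x ≠ 0 := sub_ne_zero.mpr hx.symm
  set c := (y * (1 - x) ^ 2)⁻¹
  set c' := 2 * (r : K) - 2 * x / (1 - x)
  have hc : c * y * (1 - x) ^ 2 = 1 := by simp only [c]; field_simp
  have hc' : c' * (1 - x) = 2 * r * (1 - x) - 2 * x := by simp only [c']; field_simp
  have hcR := congrArg (algebraMap K R) hc
  have hc'R := congrArg (algebraMap K R) hc'
  simp only [map_mul, map_sub, map_pow, map_one, map_natCast, map_ofNat] at hcR hc'R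
  rw [pow_eq_one_sub_mul_of_one_sub_sq_eq_zero hP]
  push_cast
  set C := algebraMap K R c
  set C' := algebraMap K R c'
  set X := algebraMap K R x
  set Y := algebraMap K R y
  -- Expanded in `1 - P`, `hcR` is the constant term, `hc'R` the linear one; the rest is a
  -- multiple of `(1 - P)²`.
  linear_combination hcR + C * Y * (1 - X) * (1 - P) * hc'R
    + C * Y * (-(2 * r) * C' * (1 - X) ^ 2 + 2 * X * (1 - X) * (C' - 2 * r) + X ^ 2
      + (-(4 * r) * C' * X * (1 - X) + (C' - 2 * r) * X ^ 2) * (1 - P)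
      - 2 * r * C' * X ^ 2 * (1 - P) ^ 2) * hP

theorem sq_mul_prod_mul_inverse_eq {P T : R} (hP : (1 - P) ^ 2 = 0)
    (hPT : (1 - P * T) ^ 2 * (1 - T) = 0) {t : K} (ht₀ : t ≠ 0) (ht : ¬IsOfFinOrder t) {r : ℕ}
    (hr : 0 < r) :
    (1 - P * T) ^ 2 * (∏ m ∈ Icc 1 (r - 1), (1 - P * T * algebraMap K R t ^ m) ^ 2) *
        Ring.inverse ((P * T) ^ (2 * r) * algebraMap K R t ^ (r * (r - 1)) *
          ∏ m ∈ Icc 1 r, (1 - P * algebraMap K R t ^ m) ^ 2)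
      = algebraMap K R ((t ^ r) ^ (1 - r : ℤ) / (1 - t ^ r) ^ 2) * (1 - P * T) ^ 2
        + algebraMap K R ((t ^ r) ^ (1 - r : ℤ) / (1 - t ^ r) ^ 2 * (2 * r - 2 * t ^ r / (1 - t ^ r)))
          * (1 - P * T) ^ 3 := by
  obtain ⟨n, rfl⟩ : ∃ n, r = n + 1 := ⟨r - 1, by omega⟩
  simp only [Nat.add_sub_cancel]
  have ht₁ : ∀ m, 0 < m → t ^ m ≠ 1 := fun m hm h =>
    ht (isOfFinOrder_iff_pow_eq_one.mpr ⟨m, hm, h⟩)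
  have hD : IsUnit ((P * T) ^ (2 * (n + 1)) * algebraMap K R t ^ ((n + 1) * n) *
      ∏ m ∈ Icc 1 (n + 1), (1 - P * algebraMap K R t ^ m) ^ 2) := by
    refine (((isUnit_mul_of_one_sub_sq_eq_zero hP hPT).pow _).mul
      (((isUnit_iff_ne_zero.mpr ht₀).map _).pow _)).mul (IsUnit.prod_iff.mpr fun m hm => ?_)
    rw [← map_pow]
    exact (isUnit_one_sub_mul_algebraMap hP (ht₁ m (mem_Icc.mp hm).1)).pow 2
  have hT := mk_annihilator_eq_one hPT
  have hN : (1 - P * T) ^ 2 * ∏ m ∈ Icc 1 n, (1 - P * T * algebraMap K R t ^ m) ^ 2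
      = (1 - P * T) ^ 2 * ∏ m ∈ Icc 1 n, (1 - P * algebraMap K R t ^ m) ^ 2 :=
    mul_eq_mul_of_mk_annihilator_eq <| by
      simp only [map_prod, map_pow, map_sub, map_one, map_mul, hT, mul_one]
  have hD_eq : (1 - P * T) ^ 2 * ((P * T) ^ (2 * (n + 1)) * algebraMap K R t ^ ((n + 1) * n) *
        ∏ m ∈ Icc 1 (n + 1), (1 - P * algebraMap K R t ^ m) ^ 2)
      = (1 - P * T) ^ 2 * (P ^ (2 * (n + 1)) * algebraMap K R t ^ ((n + 1) * n) *
        ∏ m ∈ Icc 1 (n + 1), (1 - P * algebraMap K R t ^ m) ^ 2) :=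
    mul_eq_mul_of_mk_annihilator_eq <| by simp only [map_mul, map_pow, hT, mul_one]
  have hc : (t ^ (n + 1)) ^ (1 - (n + 1 : ℕ) : ℤ) / (1 - t ^ (n + 1)) ^ 2
      = (t ^ ((n + 1) * n) * (1 - t ^ (n + 1)) ^ 2)⁻¹ := by
    rw [show (1 : ℤ) - (n + 1 : ℕ) = -n by push_cast; ring, zpow_neg, zpow_natCast, pow_mul,
      mul_inv, div_eq_mul_inv]
  have hinv := pow_mul_one_sub_mul_sq_mul_eq_one hP (n + 1) (ht₁ _ n.add_one_pos)
    (pow_ne_zero ((n + 1) * n) ht₀)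
  rw [map_pow, map_pow] at hinv
  rw [eq_comm, Ring.eq_mul_inverse_iff_mul_eq _ _ _ hD, hN, map_mul, hc]
  rw [prod_Icc_succ_top (Nat.le_add_left 1 n)] at hD_eq ⊢
  set N := ∏ m ∈ Icc 1 n, (1 - P * algebraMap K R t ^ m) ^ 2
  set c := algebraMap K R (t ^ ((n + 1) * n) * (1 - t ^ (n + 1)) ^ 2)⁻¹
  set c' := algebraMap K R (2 * (n + 1 : ℕ) - 2 * t ^ (n + 1) / (1 - t ^ (n + 1)))
  -- The `hPT` term accounts for `v³ = v² (1 - P)`.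
  linear_combination c * (1 + c' * (1 - P)) * hD_eq + (1 - P * T) ^ 2 * N * hinv
    + c * c' * ((P * T) ^ (2 * (n + 1)) * algebraMap K R t ^ ((n + 1) * n) * N *
      (1 - P * algebraMap K R t ^ (n + 1)) ^ 2) * P * hPT

end Algebra

theorem RatFunc.not_isOfFinOrder_X {K : Type*} [Field K] :
    ¬IsOfFinOrder (RatFunc.X : RatFunc K) := by
  rw [isOfFinOrder_iff_pow_eq_one]
  rintro ⟨m, hm, h⟩
  have hpoly : (Polynomial.X ^ m : Polynomial K) = 1 :=
    RatFunc.algebraMap_injective K (by simpa only [map_pow, RatFunc.algebraMap_X, map_one] using h)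
  have := congrArg Polynomial.natDegree hpoly
  rw [Polynomial.natDegree_X_pow, Polynomial.natDegree_one] at this
  omega

theorem zpow_neg_mul_sub {K : Type*} [DivisionRing K] (t : K) (r i : ℕ) :
    t ^ (-(r * (r - i) : ℤ)) = (t ^ r) ^ ((i : ℤ) - r) := by
  rw [← zpow_natCast, ← zpow_mul]
  ring_nf

theorem one_sub_Pcl_sq : (1 - Pcl) ^ 2 = 0 := by
  have h : Ideal.Quotient.mk relIdeal ((1 - MvPolynomial.X 0) ^ 2) = 0 :=
    Ideal.Quotient.eq_zero_iff_mem.mpr (Ideal.subset_span (by simp))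
  simpa only [map_pow, map_sub, map_one, Pcl] using h

theorem one_sub_Pcl_mul_Tcl_sq_mul : (1 - Pcl * Tcl) ^ 2 * (1 - Tcl) = 0 := by
  have h : Ideal.Quotient.mk relIdeal
      ((1 - MvPolynomial.X 0 * MvPolynomial.X 1) ^ 2 * (1 - MvPolynomial.X 1)) = 0 :=
    Ideal.Quotient.eq_zero_iff_mem.mpr (Ideal.subset_span (by simp))
  simpa only [map_pow, map_sub, map_one, map_mul, Pcl, Tcl] using h

/-- The degree-`r` coefficient of the specialized small `I`-function of
`Y_{−1,−1}` decomposes into a Laurent-polynomial part in `q` and pole parts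
built from the multiple-cover functions `a(r, q^r)` and `b(r, q^r)`. -/
theorem stmt_12 (r : ℕ) (hr : 1 ≤ r) :
    IsUnit qcl ∧ IsUnit (Pcl * Tcl) ∧ IsUnit (1 - Pcl * qcl ^ r) ∧
      IsUnit (1 - (RatFunc.X : Fq) ^ r) ∧
      (1 - Pcl * Tcl) ^ 2 * (∏ m ∈ Finset.Icc 1 (r - 1), (1 - Pcl * Tcl * qcl ^ m) ^ 2) *
          Ring.inverse
            ((Pcl * Tcl) ^ (2 * r) * qcl ^ (r * (r - 1)) *
              ∏ m ∈ Finset.Icc 1 r, (1 - Pcl * qcl ^ m) ^ 2) =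
        algebraMap Fq Aring
            (∑ i ∈ Finset.Icc 1 (r - 1), (i : Fq) * (RatFunc.X : Fq) ^ (-(r * (r - i) : ℤ))) *
            (1 - Pcl * Tcl) ^ 2 +
          algebraMap Fq Aring
              (∑ i ∈ Finset.Icc 1 (r - 1),
                ((i : Fq) * (2 * (r : Fq) - (i : Fq) + 1)) *
                  (RatFunc.X : Fq) ^ (-(r * (r - i) : ℤ))) *
            (1 - Pcl * Tcl) ^ 3 +
          algebraMap Fq Aring
              (((r : Fq) - 1) / (1 - (RatFunc.X : Fq) ^ r) +
                1 / (1 - (RatFunc.X : Fq) ^ r) ^ 2) *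
            ((1 - Pcl * Tcl) ^ 2 + (1 - Pcl * Tcl) ^ 3) +
          algebraMap Fq Aring
              (((r : Fq) ^ 2 - 1) / (1 - (RatFunc.X : Fq) ^ r) +
                3 / (1 - (RatFunc.X : Fq) ^ r) ^ 2 -
                2 / (1 - (RatFunc.X : Fq) ^ r) ^ 3) *
            (1 - Pcl * Tcl) ^ 3 := by
  have hX₀ : (RatFunc.X : Fq) ≠ 0 := RatFunc.X_ne_zero
  have hXr : (RatFunc.X : Fq) ^ r ≠ 1 := fun h =>
    RatFunc.not_isOfFinOrder_X (isOfFinOrder_iff_pow_eq_one.mpr ⟨r, hr, h⟩)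
  refine ⟨(isUnit_iff_ne_zero.mpr hX₀).map _,
    isUnit_mul_of_one_sub_sq_eq_zero one_sub_Pcl_sq one_sub_Pcl_mul_Tcl_sq_mul,
    by simpa only [qcl, map_pow] using isUnit_one_sub_mul_algebraMap one_sub_Pcl_sq hXr,
    isUnit_iff_ne_zero.mpr (sub_ne_zero.mpr hXr.symm), ?_⟩
  rw [qcl, sq_mul_prod_mul_inverse_eq one_sub_Pcl_sq one_sub_Pcl_mul_Tcl_sq_mul hX₀
      RatFunc.not_isOfFinOrder_X hr,
    ← sum_add_multipleCoverA_add_multipleCoverB (pow_ne_zero r hX₀) hXr,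
    ← sum_add_multipleCoverA (pow_ne_zero r hX₀) hXr]
  simp only [zpow_neg_mul_sub, multipleCoverA, multipleCoverB, map_add]
  ring
end
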